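/- arXiv:1001.2203 — 3 statements merged into one kernel-verified Lean document; each statement's English description precedes it below -/
import Mathlib

section
/- The pinwheel angle φ = arctan(1/2) is an irrational multiple of π; that is, there are no nonzero integers m, n with m·φ = n·π. -/
/-!
Since `arg (2 + i) = φ`, a relation `k φ ∈ πℤ` with `k ≥ 1` would make `(2 + i)^k` real.
Multiplying `a + b i` by `2 + i` turns `a + 2b` into `4a + 3b ≡ -(a + 2b) (mod 5)`, so `a + 2b`
is never divisible by `5` for `a + b i = (2 + i)^j`; yet `(2 + i)^(j+1)` has imaginary part `a + 2b`.
-/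

open Complex

namespace GaussianInt

lemma not_five_dvd_re_add_two_mul_im_two_add_i_pow (k : ℕ) :
    ¬ (5 : ℤ) ∣ ((⟨2, 1⟩ ^ k : GaussianInt).re + 2 * (⟨2, 1⟩ ^ k : GaussianInt).im) := by
  induction k with
  | zero => decide
  | succ k ih =>
    simp only [pow_succ, Zsqrtd.re_mul, Zsqrtd.im_mul]
    omega

lemma im_two_add_i_pow_ne_zero {k : ℕ} (hk : k ≠ 0) : (⟨2, 1⟩ ^ k : GaussianInt).im ≠ 0 := by
  obtain ⟨j, rfl⟩ := Nat.exists_eq_succ_of_ne_zero hk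
  have := not_five_dvd_re_add_two_mul_im_two_add_i_pow j
  simp only [pow_succ, Zsqrtd.im_mul]
  omega

end GaussianInt

namespace Complex

lemma im_pow_eq_norm_pow_mul_sin (z : ℂ) (k : ℕ) :
    (z ^ k).im = ‖z‖ ^ k * Real.sin (k * arg z) := by
  conv_lhs => rw [← norm_mul_exp_arg_mul_I z, mul_pow, ← exp_nat_mul, ← ofReal_pow]
  rw [im_ofReal_mul, show (k : ℂ) * (arg z * I) = ((k * arg z : ℝ) : ℂ) * I by push_cast; ring,
    exp_ofReal_mul_I_im]

lemma arg_eq_arctan_of_re_pos {z : ℂ} (hz : 0 < z.re) : arg z = Real.arctan (z.im / z.re) := by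
  have hlt := abs_arg_lt_pi_div_two_iff.2 (Or.inl hz)
  rw [← tan_arg, Real.arctan_tan (abs_lt.1 hlt).1 (abs_lt.1 hlt).2]

end Complex

lemma sin_nat_mul_arctan_half_ne_zero {k : ℕ} (hk : k ≠ 0) :
    Real.sin (k * Real.arctan (1 / 2)) ≠ 0 := by
  have harg : Real.arctan (1 / 2) = arg (2 + I) := by
    rw [arg_eq_arctan_of_re_pos (by simp)]; simp
  have hcast : ((⟨2, 1⟩ ^ k : GaussianInt) : ℂ) = (2 + I) ^ k := by
    rw [map_pow, GaussianInt.toComplex_def']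
    push_cast
    ring
  have him : ((2 + I) ^ k).im ≠ 0 := by
    rw [← hcast, ← GaussianInt.intCast_im]
    exact_mod_cast GaussianInt.im_two_add_i_pow_ne_zero hk
  rw [im_pow_eq_norm_pow_mul_sin, ← harg] at him
  exact right_ne_zero_of_mul him

/-- The pinwheel angle `φ = arctan(1/2)` is an irrational multiple of `π`:
there are no nonzero integers `m, n` with `m·φ = n·π`. -/
theorem pinwheel_angle_irrational :
    ¬ ∃ m n : ℤ, m ≠ 0 ∧ n ≠ 0 ∧ (m : ℝ) * Real.arctan (1 / 2) = (n : ℝ) * Real.pi := by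
  rintro ⟨m, n, hm, -, h⟩
  obtain ⟨k, rfl | rfl⟩ := m.eq_nat_or_neg
  · refine sin_nat_mul_arctan_half_ne_zero (k := k) (by simpa using hm) ?_
    rw [← Int.cast_natCast, h, Real.sin_int_mul_pi]
  · refine sin_nat_mul_arctan_half_ne_zero (k := k) (by simpa using hm) ?_
    rw [show (k : ℝ) * Real.arctan (1 / 2) = ((-n : ℤ) : ℝ) * Real.pi by push_cast at h ⊢; linarith,
      Real.sin_int_mul_pi]
end

section
/- The image of the standard pinwheel triangle under the matrix M_P = [[2,1],[-1,2]] can be partitioned (up to boundary overlaps of measure zero) into 5 triangles, each congruent to the standard pinwheel triangle, whose union equals the image and whose interiors are pairwise disjoint. -/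
open MeasureTheory

noncomputable def pt (a b : ℝ) : EuclideanSpace ℝ (Fin 2) :=
  (WithLp.equiv 2 (Fin 2 → ℝ)).symm ![a, b]

/-- The standard pinwheel triangle. -/
noncomputable def stdTriangle : Set (EuclideanSpace ℝ (Fin 2)) :=
  convexHull ℝ {pt (-0.5) (-0.5), pt 0.5 (-0.5), pt (-0.5) 1.5}

/-- The pinwheel inflation map, multiplication by `M_P = [[2,1],[-1,2]]`. -/
noncomputable def inflate (p : EuclideanSpace ℝ (Fin 2)) : EuclideanSpace ℝ (Fin 2) :=
  pt (2 * (WithLp.equiv 2 (Fin 2 → ℝ) p) 0 + (WithLp.equiv 2 (Fin 2 → ℝ) p) 1)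
     (-(WithLp.equiv 2 (Fin 2 → ℝ) p) 0 + 2 * (WithLp.equiv 2 (Fin 2 → ℝ) p) 1)

/-!
Every triangle involved is an intersection of three closed half-planes, so all three claims
reduce to linear inequalities. In coordinates `T = {x ≥ -1/2, y ≥ -1/2, 2x + y ≤ 1/2}` and
`M_P T = {2x - y ≥ -5/2, x + 2y ≥ -5/2, x ≤ 1/2}`; the lines `y = -1/2`, `x = -1/2`, `y = 3/2`
and `y = 2x + 1/2` cut `M_P T` into five triangles, each the image of `T` under a map
`p ↦ A p + v` with `A` a signed permutation matrix. The interior of a half-plane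
`a x + b y ≤ c` with `(a, b) ≠ 0` is the open half-plane, so a common interior point of two tiles
would satisfy six strict inequalities, which are jointly infeasible for every pair.
-/

open Set Matrix Function

theorem interior_setOf_le_of_ne_zero {E : Type*} [AddCommGroup E] [TopologicalSpace E]
    [ContinuousAdd E] [Module ℝ E] [ContinuousSMul ℝ E] {f : StrongDual ℝ E} (hf : f ≠ 0)
    (c : ℝ) : interior {x | f x ≤ c} = {x | f x < c} := by
  have h := (f.isOpenMap_of_ne_zero hf).preimage_interior_eq_interior_preimage f.continuous (Iic c)
  rw [interior_Iic] at h
  exact h.symm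

noncomputable def orthogonalIsometry {n : Type*} [Fintype n] [DecidableEq n]
    (A : orthogonalGroup n ℝ) : EuclideanSpace ℝ n ≃ᵢ EuclideanSpace ℝ n :=
  (Unitary.linearIsometryEquiv ⟨toEuclideanCLM (𝕜 := ℝ) A.1, Unitary.map_mem _ A.2⟩).toIsometryEquiv

noncomputable def orthogonalAffineIsometry {n : Type*} [Fintype n] [DecidableEq n]
    (A : orthogonalGroup n ℝ) (v : EuclideanSpace ℝ n) : EuclideanSpace ℝ n ≃ᵢ EuclideanSpace ℝ n :=
  (orthogonalIsometry A).trans (IsometryEquiv.addRight v)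

@[simp]
theorem orthogonalAffineIsometry_apply {n : Type*} [Fintype n] [DecidableEq n]
    (A : orthogonalGroup n ℝ) (v p : EuclideanSpace ℝ n) (i : n) :
    orthogonalAffineIsometry A v p i = ((A : Matrix n n ℝ) *ᵥ p.ofLp) i + v i :=
  rfl

local notation "ℝ²" => EuclideanSpace ℝ (Fin 2)

@[simp]
theorem pt_apply_zero (a b : ℝ) : pt a b 0 = a := rfl

@[simp]
theorem pt_apply_one (a b : ℝ) : pt a b 1 = b := rfl

noncomputable def planeForm (a b : ℝ) : StrongDual ℝ ℝ² :=
  a • EuclideanSpace.proj 0 + b • EuclideanSpace.proj 1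

@[simp]
theorem planeForm_apply (a b : ℝ) (p : ℝ²) : planeForm a b p = a * p 0 + b * p 1 := rfl

theorem planeForm_ne_zero {a b : ℝ} (hab : a ≠ 0 ∨ b ≠ 0) : planeForm a b ≠ 0 := by
  intro h
  have ha : a = 0 := by simpa using congr($h (pt 1 0))
  have hb : b = 0 := by simpa using congr($h (pt 0 1))
  exact hab.elim (· ha) (· hb)

def halfPlane (a b c : ℝ) : Set ℝ² := {p | a * p 0 + b * p 1 ≤ c}

theorem mem_halfPlane {a b c : ℝ} {p : ℝ²} : p ∈ halfPlane a b c ↔ a * p 0 + b * p 1 ≤ c :=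
  Iff.rfl

theorem convex_halfPlane (a b c : ℝ) : Convex ℝ (halfPlane a b c) :=
  convex_halfSpace_le (planeForm a b).toLinearMap.isLinear c

theorem interior_halfPlane {a b : ℝ} (hab : a ≠ 0 ∨ b ≠ 0) (c : ℝ) :
    interior (halfPlane a b c) = {p | a * p 0 + b * p 1 < c} :=
  interior_setOf_le_of_ne_zero (planeForm_ne_zero hab) c

theorem Function.Surjective.image_eq_of_preimage_eq {α β : Type*} {f : α → β}
    (hf : Surjective f) {s : Set α} {t : Set β} (h : f ⁻¹' t = s) : f '' s = t :=
  h ▸ hf.image_preimage t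

theorem stdTriangle_eq :
    stdTriangle = halfPlane (-1) 0 (1/2) ∩ halfPlane 0 (-1) (1/2) ∩ halfPlane 2 1 (1/2) := by
  refine (convexHull_min ?_ ?_).antisymm fun p ⟨⟨h₁, h₂⟩, h₃⟩ => ?_
  · rintro q (rfl | rfl | rfl) <;> norm_num [halfPlane]
  · exact ((convex_halfPlane _ _ _).inter (convex_halfPlane _ _ _)).inter (convex_halfPlane _ _ _)
  · rw [mem_halfPlane] at h₁ h₂ h₃
    -- the weights are the barycentric coordinates of `p`
    refine mem_convexHull_of_exists_fintype ![(1/2 - 2 * p 0 - p 1) / 2, p 0 + 1/2, (p 1 + 1/2) / 2]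
      ![pt (-0.5) (-0.5), pt 0.5 (-0.5), pt (-0.5) 1.5] ?_ ?_ ?_ ?_
    · intro i; fin_cases i <;> simp only [Fin.zero_eta, Fin.mk_one, Fin.reduceFinMk, cons_val] <;> linarith
    · simp only [Fin.sum_univ_three, cons_val]; ring
    · intro i; fin_cases i <;> simp
    · ext i; fin_cases i <;>
        simp only [Fin.sum_univ_three, Fin.zero_eta, Fin.mk_one, cons_val, PiLp.add_apply,
          PiLp.smul_apply, pt_apply_zero, pt_apply_one, smul_eq_mul] <;> ring

def negX : orthogonalGroup (Fin 2) ℝ :=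
  ⟨!![-1, 0; 0, 1], by
    rw [mem_orthogonalGroup_iff]; ext i j; fin_cases i <;> fin_cases j <;> simp [mul_apply]⟩

def negY : orthogonalGroup (Fin 2) ℝ :=
  ⟨!![1, 0; 0, -1], by
    rw [mem_orthogonalGroup_iff]; ext i j; fin_cases i <;> fin_cases j <;> simp [mul_apply]⟩

def negSwap : orthogonalGroup (Fin 2) ℝ :=
  ⟨!![0, -1; -1, 0], by
    rw [mem_orthogonalGroup_iff]; ext i j; fin_cases i <;> fin_cases j <;> simp [mul_apply]⟩

noncomputable def tileIsometry : Fin 5 → ℝ² ≃ᵢ ℝ² :=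
  ![orthogonalAffineIsometry negSwap (pt 0 (-1)),
    orthogonalAffineIsometry negX (pt (-1) 0),
    orthogonalAffineIsometry negX 0,
    orthogonalAffineIsometry negX (pt 0 2),
    orthogonalAffineIsometry negY (pt 0 1)]

def tile : Fin 5 → Set ℝ² :=
  ![halfPlane 0 1 (-1/2) ∩ halfPlane 1 0 (1/2) ∩ halfPlane (-1) (-2) (5/2),
    halfPlane 1 0 (-1/2) ∩ halfPlane 0 (-1) (1/2) ∩ halfPlane (-2) 1 (5/2),
    halfPlane 1 0 (1/2) ∩ halfPlane 0 (-1) (1/2) ∩ halfPlane (-2) 1 (1/2),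
    halfPlane 1 0 (1/2) ∩ halfPlane 0 (-1) (-3/2) ∩ halfPlane (-2) 1 (5/2),
    halfPlane (-1) 0 (1/2) ∩ halfPlane 0 1 (3/2) ∩ halfPlane 2 (-1) (-1/2)]

theorem image_tileIsometry_stdTriangle (i : Fin 5) : tileIsometry i '' stdTriangle = tile i := by
  refine (tileIsometry i).surjective.image_eq_of_preimage_eq ?_
  rw [stdTriangle_eq]
  ext p
  fin_cases i <;>
    simp only [tileIsometry, tile, negX, negY, negSwap, mem_preimage, mem_inter_iff, mem_halfPlane,
      orthogonalAffineIsometry_apply, mulVec, dotProduct, Fin.sum_univ_two, of_apply, cons_val,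
      Fin.zero_eta, Fin.mk_one, Fin.reduceFinMk, pt_apply_zero, pt_apply_one, PiLp.zero_apply] <;>
    constructor <;> rintro ⟨⟨h₁, h₂⟩, h₃⟩ <;> refine ⟨⟨?_, ?_⟩, ?_⟩ <;> linarith

@[simp]
theorem inflate_apply_zero (p : ℝ²) : inflate p 0 = 2 * p 0 + p 1 := rfl

@[simp]
theorem inflate_apply_one (p : ℝ²) : inflate p 1 = -p 0 + 2 * p 1 := rfl

theorem inflate_surjective : Surjective inflate := fun q =>
  ⟨pt ((2 * q 0 - q 1) / 5) ((q 0 + 2 * q 1) / 5), by ext i; fin_cases i <;>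
    simp only [Fin.zero_eta, Fin.mk_one, inflate_apply_zero, inflate_apply_one, pt_apply_zero,
      pt_apply_one] <;> ring⟩

theorem image_inflate_stdTriangle : inflate '' stdTriangle =
    halfPlane (-2) 1 (5/2) ∩ halfPlane (-1) (-2) (5/2) ∩ halfPlane 1 0 (1/2) := by
  refine inflate_surjective.image_eq_of_preimage_eq ?_
  rw [stdTriangle_eq]
  ext p
  simp only [mem_preimage, mem_inter_iff, mem_halfPlane, inflate_apply_zero, inflate_apply_one]
  constructor <;> rintro ⟨⟨h₁, h₂⟩, h₃⟩ <;> refine ⟨⟨?_, ?_⟩, ?_⟩ <;> linarith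

theorem iUnion_tile : ⋃ i, tile i = inflate '' stdTriangle := by
  rw [image_inflate_stdTriangle]
  refine (iUnion_subset fun i p hp => ?_).antisymm fun p hp => mem_iUnion.2
    ⟨if p 1 ≤ -1/2 then 0 else if p 0 ≤ -1/2 then 1 else if 3/2 ≤ p 1 then 3
      else if p 1 ≤ 2 * p 0 + 1/2 then 2 else 4, ?_⟩
  · fin_cases i <;>
      simp only [tile, Fin.zero_eta, Fin.mk_one, Fin.reduceFinMk, cons_val, mem_inter_iff,
        mem_halfPlane] at hp ⊢ <;>
      refine ⟨⟨?_, ?_⟩, ?_⟩ <;> linarith [hp.1.1, hp.1.2, hp.2]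
  · simp only [mem_inter_iff, mem_halfPlane] at hp
    split_ifs <;> simp only [tile, cons_val, mem_inter_iff, mem_halfPlane] <;>
      refine ⟨⟨?_, ?_⟩, ?_⟩ <;> linarith [hp.1.1, hp.1.2, hp.2]

theorem pairwise_disjoint_interior_tile :
    Pairwise fun i j => Disjoint (interior (tile i)) (interior (tile j)) := by
  intro i j hij
  rw [Set.disjoint_left]
  intro p hi hj
  fin_cases i <;> fin_cases j <;> first
    | exact absurd rfl hij
    | simp (disch := norm_num) only [tile, Fin.zero_eta, Fin.mk_one, Fin.reduceFinMk,
        cons_val, interior_inter, interior_halfPlane, mem_inter_iff, mem_ofPred_eq] at hi hj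
      linarith [hi.1.1, hi.1.2, hi.2, hj.1.1, hj.1.2, hj.2]

/-- The inflated standard triangle `M_P(T)` is the union of 5 triangles, each an
isometric copy of `T`, with pairwise disjoint interiors. -/
theorem pinwheel_subdivision :
    ∃ t : Fin 5 → Set (EuclideanSpace ℝ (Fin 2)),
      (∀ i, ∃ g : EuclideanSpace ℝ (Fin 2) ≃ᵢ EuclideanSpace ℝ (Fin 2),
        t i = g '' stdTriangle) ∧
      (⋃ i, t i) = inflate '' stdTriangle ∧
      (∀ i j, i ≠ j → Disjoint (interior (t i)) (interior (t j))) :=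
  ⟨tile, fun i => ⟨tileIsometry i, (image_tileIsometry_stdTriangle i).symm⟩, iUnion_tile,
    fun _ _ hij => pairwise_disjoint_interior_tile hij⟩
end

section
/- Two pinwheel triangles (right triangles with legs 1 and 2) joined along their full hypotenuses form, up to isometry, either a 'kite' quadrilateral or a 1×2 'domino' rectangle, and these are the only two possibilities up to isometry (counting the two diagonal choices of domino as one shape). -/
/-- The hypotenuse of the standard pinwheel triangle. -/
noncomputable def stdHyp : Set (EuclideanSpace ℝ (Fin 2)) :=
  segment ℝ (pt 0.5 (-0.5)) (pt (-0.5) 1.5)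

/-- The kite: the standard triangle glued to its reflection across the
hypotenuse (the reflection of `(-0.5,-0.5)` is `(1.1,0.3)`). -/
noncomputable def kite : Set (EuclideanSpace ℝ (Fin 2)) :=
  convexHull ℝ {pt (-0.5) (-0.5), pt 0.5 (-0.5), pt 1.1 0.3, pt (-0.5) 1.5}

/-- The domino: the 1×2 rectangle `[-0.5,0.5] × [-0.5,1.5]`. -/
noncomputable def domino : Set (EuclideanSpace ℝ (Fin 2)) :=
  convexHull ℝ {pt (-0.5) (-0.5), pt 0.5 (-0.5), pt 0.5 1.5, pt (-0.5) 1.5}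

/-
Pull everything back by `e₁⁻¹`. Then `f = e₁⁻¹ ∘ e₂` is an isometry mapping the hypotenuse onto
itself, so it fixes or swaps its endpoints, and it sends the right-angle vertex to one of the two
points at distances 1 and 2 from them. Of the four triangles this allows, the standard triangle
itself and its mirror image in the perpendicular bisector of the hypotenuse overlap the standard
triangle; the other two complete it to the kite and the domino, each of which is cut by a diagonal
into the two triangles.
-/

open Set

section Segment

variable {𝕜 E : Type*} [Field 𝕜] [LinearOrder 𝕜] [IsStrictOrderedRing 𝕜] [AddCommGroup E]
  [Module 𝕜 E]

theorem mem_segment_or_mem_segment_of_mem_segment {a c p y : E} (hp : p ∈ segment 𝕜 a c)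
    (hy : y ∈ segment 𝕜 a c) : y ∈ segment 𝕜 a p ∨ y ∈ segment 𝕜 p c := by
  simp only [mem_segment_iff_wbtw] at *
  have hray : SameRay 𝕜 (y -ᵥ a) (p -ᵥ a) :=
    hy.sameRay_vsub_left.trans hp.sameRay_vsub_left.symm fun hca => by
      obtain rfl := vsub_eq_zero_iff_eq.1 hca
      exact Or.inl (vsub_eq_zero_iff_eq.2 ((wbtw_self_iff 𝕜).1 hy))
  rcases wbtw_total_of_sameRay_vsub_left hray with h | h
  · exact Or.inl h
  · exact Or.inr (hy.trans_left_right h)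

theorem convexHull_insert_four_eq_union {a b c d p : E} (hac : p ∈ segment 𝕜 a c)
    (hbd : p ∈ segment 𝕜 b d) :
    convexHull 𝕜 {a, b, c, d} = convexHull 𝕜 {a, b, d} ∪ convexHull 𝕜 {c, b, d} := by
  refine Subset.antisymm ?_ (union_subset (convexHull_mono ?_) (convexHull_mono ?_))
  rotate_left
  · intro; simp only [mem_insert_iff, mem_singleton_iff]; tauto
  · intro; simp only [mem_insert_iff, mem_singleton_iff]; tauto
  intro x hx
  rw [insert_comm b c, ← convexJoin_segments, mem_convexJoin] at hx
  obtain ⟨y, hy, z, hz, hxyz⟩ := hx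
  have key : ∀ e, y ∈ segment 𝕜 e p → x ∈ convexHull 𝕜 {e, b, d} := fun e hye => by
    have hbd_sub : segment 𝕜 b d ⊆ convexHull 𝕜 {e, b, d} :=
      (convex_convexHull 𝕜 _).segment_subset (subset_convexHull 𝕜 _ (by simp))
        (subset_convexHull 𝕜 _ (by simp))
    have hy' := (convex_convexHull 𝕜 _).segment_subset (subset_convexHull 𝕜 _ (by simp))
      (hbd_sub hbd) hye
    exact (convex_convexHull 𝕜 _).segment_subset hy' (hbd_sub hz) hxyz
  rcases mem_segment_or_mem_segment_of_mem_segment hac hy with h | h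
  · exact Or.inl (key a h)
  · exact Or.inr (key c (segment_symm 𝕜 p c ▸ h))

end Segment

theorem mem_interior_convexHull_of_coords {E : Type*} [TopologicalSpace E] [AddCommGroup E]
    [Module ℝ E] {a b c : E} (α β γ : E → ℝ) (hα : Continuous α) (hβ : Continuous β)
    (hγ : Continuous γ) (hsum : ∀ x, α x + β x + γ x = 1)
    (hcomb : ∀ x, α x • a + β x • b + γ x • c = x) {x : E}
    (hx : 0 < α x ∧ 0 < β x ∧ 0 < γ x) : x ∈ interior (convexHull ℝ {a, b, c}) := by
  refine interior_maximal (t := {y | 0 < α y ∧ 0 < β y ∧ 0 < γ y}) ?_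
    ((isOpen_lt continuous_const hα).inter
      ((isOpen_lt continuous_const hβ).inter (isOpen_lt continuous_const hγ))) hx
  rintro y ⟨hαy, hβy, hγy⟩
  have := (convex_convexHull ℝ ({a, b, c} : Set E)).sum_mem (t := Finset.univ)
    (w := ![α y, β y, γ y]) (z := ![a, b, c])
    (by simp [Fin.forall_fin_succ, hαy.le, hβy.le, hγy.le]) (by simp [Fin.sum_univ_three, hsum])
    fun i _ => subset_convexHull ℝ _ (by fin_cases i <;> simp)
  simpa [Fin.sum_univ_three, hcomb] using this

section Normed

variable {E : Type*} [NormedAddCommGroup E] [NormedSpace ℝ E]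

theorem eq_endpoints_of_mem_segment_of_dist_eq {a b x y : E} (hx : x ∈ segment ℝ a b)
    (hy : y ∈ segment ℝ a b) (hxy : dist x y = dist a b) :
    x = a ∧ y = b ∨ x = b ∧ y = a := by
  rcases eq_or_ne a b with rfl | hab
  · simp_all
  rw [segment_eq_image_lineMap] at hx hy
  obtain ⟨s, ⟨hs0, hs1⟩, rfl⟩ := hx
  obtain ⟨t, ⟨ht0, ht1⟩, rfl⟩ := hy
  rw [dist_lineMap_lineMap] at hxy
  have hst : |s - t| = 1 := by
    rw [← Real.dist_eq]
    exact (mul_eq_right₀ (dist_ne_zero.2 hab)).1 hxy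
  rcases (abs_eq zero_le_one).1 hst with h | h
  · obtain ⟨rfl, rfl⟩ : s = 1 ∧ t = 0 := ⟨by linarith, by linarith⟩
    simp
  · obtain ⟨rfl, rfl⟩ : s = 0 ∧ t = 1 := ⟨by linarith, by linarith⟩
    simp

theorem Isometry.endpoints_of_mapsTo_segment {f : E → E} (hf : Isometry f) {a b : E}
    (h : MapsTo f (segment ℝ a b) (segment ℝ a b)) :
    f a = a ∧ f b = b ∨ f a = b ∧ f b = a :=
  eq_endpoints_of_mem_segment_of_dist_eq (h (left_mem_segment ℝ a b))
    (h (right_mem_segment ℝ a b)) (hf.dist_eq a b)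

theorem IsometryEquiv.image_convexHull {F : Type*} [NormedAddCommGroup F] [NormedSpace ℝ F]
    (f : E ≃ᵢ F) (s : Set E) : f '' convexHull ℝ s = convexHull ℝ (f '' s) :=
  f.toRealAffineIsometryEquiv.toAffineEquiv.toAffineMap.image_convexHull s

end Normed

theorem IsometryEquiv.image_interior {X Y : Type*} [PseudoEMetricSpace X] [PseudoEMetricSpace Y]
    (f : X ≃ᵢ Y) (s : Set X) : f '' interior s = interior (f '' s) :=
  f.toHomeomorph.image_interior s

namespace Pinwheel

theorem pt_apply_zero (a b : ℝ) : pt a b 0 = a := rfl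

theorem pt_apply_one (a b : ℝ) : pt a b 1 = b := rfl

theorem eq_pt {p : EuclideanSpace ℝ (Fin 2)} {a b : ℝ} (h0 : p 0 = a) (h1 : p 1 = b) :
    p = pt a b := by
  ext i; fin_cases i <;> assumption

theorem dist_pt_sq (p : EuclideanSpace ℝ (Fin 2)) (a b : ℝ) :
    dist p (pt a b) ^ 2 = (p 0 - a) ^ 2 + (p 1 - b) ^ 2 := by
  rw [EuclideanSpace.dist_eq, Real.sq_sqrt (by positivity), Fin.sum_univ_two, Real.dist_eq,
    Real.dist_eq, sq_abs, sq_abs, pt_apply_zero, pt_apply_one]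

theorem pt_mem_segment {a b c d u v : ℝ} (t : ℝ) (ht0 : 0 ≤ t) (ht1 : t ≤ 1)
    (hu : u = (1 - t) * a + t * c) (hv : v = (1 - t) * b + t * d) :
    pt u v ∈ segment ℝ (pt a b) (pt c d) :=
  ⟨1 - t, t, by linarith, ht0, by ring, by
    ext i; fin_cases i <;> simp [pt_apply_zero, pt_apply_one, hu, hv]⟩

theorem kite_eq_union :
    kite = stdTriangle ∪ convexHull ℝ {pt 1.1 0.3, pt 0.5 (-0.5), pt (-0.5) 1.5} :=
  convexHull_insert_four_eq_union (p := pt 0.3 (-0.1))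
    (pt_mem_segment (1 / 2) (by norm_num) (by norm_num) (by norm_num) (by norm_num))
    (pt_mem_segment (1 / 5) (by norm_num) (by norm_num) (by norm_num) (by norm_num))

theorem domino_eq_union :
    domino = stdTriangle ∪ convexHull ℝ {pt 0.5 1.5, pt 0.5 (-0.5), pt (-0.5) 1.5} :=
  convexHull_insert_four_eq_union (p := pt 0 0.5)
    (pt_mem_segment (1 / 2) (by norm_num) (by norm_num) (by norm_num) (by norm_num))
    (pt_mem_segment (1 / 2) (by norm_num) (by norm_num) (by norm_num) (by norm_num))

theorem eq_of_dists_to_hypotenuse {p : EuclideanSpace ℝ (Fin 2)}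
    (hB : dist p (pt 0.5 (-0.5)) = dist (pt (-0.5) (-0.5)) (pt 0.5 (-0.5)))
    (hD : dist p (pt (-0.5) 1.5) = dist (pt (-0.5) (-0.5)) (pt (-0.5) 1.5)) :
    p = pt (-0.5) (-0.5) ∨ p = pt 1.1 0.3 := by
  have eB := congrArg (· ^ 2) hB
  have eD := congrArg (· ^ 2) hD
  simp only [dist_pt_sq, pt_apply_zero, pt_apply_one] at eB eD
  have hx : p 0 = 2 * p 1 + 1 / 2 := by nlinarith
  have hy : (p 1 + 1 / 2) * (p 1 - 3 / 10) = 0 := by rw [hx] at eB; nlinarith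
  rcases mul_eq_zero.1 hy with hy | hy
  · exact Or.inl (eq_pt (by norm_num; linarith) (by norm_num; linarith))
  · exact Or.inr (eq_pt (by norm_num; linarith) (by norm_num; linarith))

theorem eq_of_dists_to_hypotenuse_swap {p : EuclideanSpace ℝ (Fin 2)}
    (hD : dist p (pt (-0.5) 1.5) = dist (pt (-0.5) (-0.5)) (pt 0.5 (-0.5)))
    (hB : dist p (pt 0.5 (-0.5)) = dist (pt (-0.5) (-0.5)) (pt (-0.5) 1.5)) :
    p = pt 0.5 1.5 ∨ p = pt (-1.1) 0.7 := by
  have eB := congrArg (· ^ 2) hB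
  have eD := congrArg (· ^ 2) hD
  simp only [dist_pt_sq, pt_apply_zero, pt_apply_one] at eB eD
  have hx : p 0 = 2 * p 1 - 5 / 2 := by nlinarith
  have hy : (p 1 - 3 / 2) * (p 1 - 7 / 10) = 0 := by rw [hx] at eD; nlinarith
  rcases mul_eq_zero.1 hy with hy | hy
  · exact Or.inl (eq_pt (by norm_num; linarith) (by norm_num; linarith))
  · exact Or.inr (eq_pt (by norm_num; linarith) (by norm_num; linarith))

theorem image_stdTriangle_cases (f : EuclideanSpace ℝ (Fin 2) ≃ᵢ EuclideanSpace ℝ (Fin 2))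
    (hf : f '' stdHyp = stdHyp) :
    ∃ c, (c = pt (-0.5) (-0.5) ∨ c = pt 1.1 0.3 ∨ c = pt 0.5 1.5 ∨ c = pt (-1.1) 0.7) ∧
      f '' stdTriangle = convexHull ℝ {c, pt 0.5 (-0.5), pt (-0.5) 1.5} := by
  have hT : f '' stdTriangle =
      convexHull ℝ {f (pt (-0.5) (-0.5)), f (pt 0.5 (-0.5)), f (pt (-0.5) 1.5)} := by
    rw [stdTriangle, f.image_convexHull, image_insert_eq, image_insert_eq, image_singleton]
  have hmaps : MapsTo f stdHyp stdHyp := mapsTo_iff_image_subset.2 hf.subset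
  rcases f.isometry.endpoints_of_mapsTo_segment hmaps with ⟨hB, hD⟩ | ⟨hB, hD⟩
  · refine ⟨f (pt (-0.5) (-0.5)), ?_, by rw [hT, hB, hD]⟩
    rcases eq_of_dists_to_hypotenuse (by simpa only [hB] using f.dist_eq _ (pt 0.5 (-0.5)))
      (by simpa only [hD] using f.dist_eq _ (pt (-0.5) 1.5)) with h | h <;>
      simp only [h, true_or, or_true]
  · refine ⟨f (pt (-0.5) (-0.5)), ?_, by rw [hT, hB, hD, pair_comm]⟩
    rcases eq_of_dists_to_hypotenuse_swap (by simpa only [hB] using f.dist_eq _ (pt 0.5 (-0.5)))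
      (by simpa only [hD] using f.dist_eq _ (pt (-0.5) 1.5)) with h | h <;>
      simp only [h, true_or, or_true]

theorem mem_interior_stdTriangle : pt (-0.1) 0.45 ∈ interior stdTriangle :=
  mem_interior_convexHull_of_coords (fun x => 1 / 4 - x 0 - x 1 / 2) (fun x => x 0 + 1 / 2)
    (fun x => x 1 / 2 + 1 / 4) (by fun_prop) (by fun_prop) (by fun_prop) (fun x => by ring)
    (fun x => by ext i; fin_cases i <;> simp [pt_apply_zero, pt_apply_one] <;> ring)
    (by norm_num [pt_apply_zero, pt_apply_one])

/-- `pt (-1.1) 0.7` is the mirror image of the right-angle vertex of `stdTriangle` in the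
perpendicular bisector of its hypotenuse. -/
theorem mem_interior_reflection_perpBisector :
    pt (-0.1) 0.45 ∈ interior (convexHull ℝ {pt (-1.1) 0.7, pt 0.5 (-0.5), pt (-0.5) 1.5}) :=
  mem_interior_convexHull_of_coords (fun x => 1 / 4 - x 0 - x 1 / 2)
    (fun x => 2 / 5 * x 0 - 3 / 10 * x 1 + 13 / 20) (fun x => 3 / 5 * x 0 + 4 / 5 * x 1 + 1 / 10)
    (by fun_prop) (by fun_prop) (by fun_prop) (fun x => by ring)
    (fun x => by ext i; fin_cases i <;> simp [pt_apply_zero, pt_apply_one] <;> ring)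
    (by norm_num [pt_apply_zero, pt_apply_one])

end Pinwheel

open Pinwheel in
/-- Two pinwheel triangles glued along their full hypotenuses, with disjoint
interiors, form up to isometry either a kite or a domino, and these are the
only two possibilities. -/
theorem kite_or_domino
    (e₁ e₂ : EuclideanSpace ℝ (Fin 2) ≃ᵢ EuclideanSpace ℝ (Fin 2))
    (hhyp : e₁ '' stdHyp = e₂ '' stdHyp)
    (hdisj : Disjoint (interior (e₁ '' stdTriangle)) (interior (e₂ '' stdTriangle))) :
    ∃ g : EuclideanSpace ℝ (Fin 2) ≃ᵢ EuclideanSpace ℝ (Fin 2),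
      g '' (e₁ '' stdTriangle ∪ e₂ '' stdTriangle) = kite ∨
      g '' (e₁ '' stdTriangle ∪ e₂ '' stdTriangle) = domino := by
  set f := e₂.trans e₁.symm
  have he₂ (s : Set (EuclideanSpace ℝ (Fin 2))) : e₂ '' s = e₁ '' (f '' s) := by
    simp [f, image_image]
  have hf : f '' stdHyp = stdHyp := image_injective.2 e₁.injective (by rw [← he₂, hhyp])
  rw [he₂, ← e₁.image_interior, ← e₁.image_interior, disjoint_image_iff e₁.injective] at hdisj
  obtain ⟨c, hc, hfT⟩ := image_stdTriangle_cases f hf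
  refine ⟨e₁.symm, ?_⟩
  rw [he₂, ← image_union, ← image_comp, e₁.symm_comp_self, image_id, hfT]
  rcases hc with rfl | rfl | rfl | rfl
  · exact absurd hdisj (not_disjoint_iff.2
      ⟨_, mem_interior_stdTriangle, hfT ▸ mem_interior_stdTriangle⟩)
  · exact Or.inl kite_eq_union.symm
  · exact Or.inr domino_eq_union.symm
  · exact absurd hdisj (not_disjoint_iff.2
      ⟨_, mem_interior_stdTriangle, hfT ▸ mem_interior_reflection_perpBisector⟩)
end
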